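/- Let A be an accessible deterministic tree automaton and let φ assign to each state q its top language L^q(A). Then φ is a morphism of tree automata from A to the bottom-up quotient automaton A_{L(A)}: φ maps final states to final states, and for every transition (q,f,q₁,…,q_k) of A, (φ(q),f,φ(q₁),…,φ(q_k)) is a transition of A_{L(A)}. -/

import Mathlib

inductive GTree (S : Type) (ar : S → ℕ) : Type where
  | eps (x : ℕ) : GTree S ar
  | node (f : S) (ts : Fin (ar f) → GTree S ar) : GTree S ar

namespace GTree

variable {S : Type} {ar : S → ℕ}

/-- Substitute each ε-symbol `ε_x` by `σ x`. -/
def subst (σ : ℕ → GTree S ar) : GTree S ar → GTree S ar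
  | eps x => σ x
  | node f ts => node f (fun i => subst σ (ts i))

/-- The multiset of ε-indices of a tree. -/
def epsIdx : GTree S ar → Multiset ℕ
  | eps x => {x}
  | node _ ts => ∑ i, epsIdx (ts i)

/-- `Inc_ε(z,t)`: increment every ε-index by `z`. -/
def inc (z : ℕ) (t : GTree S ar) : GTree S ar :=
  subst (fun x => eps (x + z)) t

/-- Composition `t ∘ (t₁,…,t_k)`: graft `ts_j` at the `j`-th smallest ε-index of `t`. -/
def compo (t : GTree S ar) (ts : List (GTree S ar)) : GTree S ar :=
  subst (fun x => ts.getD ((Multiset.sort (epsIdx t) (· ≤ ·)).idxOf x) (eps x)) t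

/-- The tree `α(ε₁,…,ε_k)` associated with a symbol `α`. -/
def symTree (f : S) : GTree S ar := node f (fun i => eps (i.1 + 1))

/-- Bottom-up quotient `d⁻¹(t)` of a tree `t` w.r.t. a tree `d`. -/
def quotT (d t : GTree S ar) : Set (GTree S ar) :=
  { u | epsIdx u = 1 ::ₘ (epsIdx t - epsIdx d).map (· + 1) ∧
        subst (fun j => if j = 1 then d else eps (j - 1)) u = t }

/-- Bottom-up quotient `d⁻¹(L)` of a language w.r.t. a tree. -/
def quotL (d : GTree S ar) (L : Set (GTree S ar)) : Set (GTree S ar) :=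
  ⋃ t ∈ L, quotT d t

def incL (z : ℕ) (L : Set (GTree S ar)) : Set (GTree S ar) := inc z '' L

/-- Composition of languages `L ∘ (L₁,…,L_k)`. -/
def compoL (L : Set (GTree S ar)) (Ls : List (Set (GTree S ar))) : Set (GTree S ar) :=
  { u | ∃ t ∈ L, ∃ ts : List (GTree S ar), List.Forall₂ (· ∈ ·) ts Ls ∧ u = compo t ts }

/-- Partial composition `t ∘₁ L'` at the first (smallest) ε-index. -/
def pcomp (t : GTree S ar) (L' : Set (GTree S ar)) : Set (GTree S ar) :=
  { u | ∃ t' ∈ L', u = compo t (t' :: ((Multiset.sort (epsIdx t) (· ≤ ·)).tail).map eps) }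

/-- Partial composition of languages `L ∘₁ L'`. -/
def pcompL (L L' : Set (GTree S ar)) : Set (GTree S ar) := ⋃ t ∈ L, pcomp t L'

/-- Tree substitution `t_{b ← L}` of the 0-ary symbol `b` by the language `L`. -/
def bsub [DecidableEq S] (b : S) (L : Set (GTree S ar)) : GTree S ar → Set (GTree S ar)
  | eps x => {eps x}
  | node f ts =>
      if f = b then L
      else { u | ∃ us : Fin (ar f) → GTree S ar, (∀ i, us i ∈ bsub b L (ts i)) ∧ u = node f us }

/-- `b`-product `L₁ ·_b L₂`. -/
def prodB [DecidableEq S] (L₁ : Set (GTree S ar)) (b : S) (L₂ : Set (GTree S ar)) :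
    Set (GTree S ar) :=
  ⋃ t ∈ L₁, bsub b L₂ t

/-- Iterated `b`-product `L^{n_b}`. -/
def iterB [DecidableEq S] (b : S) (L : Set (GTree S ar)) : ℕ → Set (GTree S ar)
  | 0 => {symTree b}
  | n + 1 => iterB b L n ∪ prodB L b (iterB b L n)

/-- `b`-closure `L^{*_b}`. -/
def closB [DecidableEq S] (b : S) (L : Set (GTree S ar)) : Set (GTree S ar) :=
  ⋃ n, iterB b L n

/-- Iterated composition `L^{n∘}` of a 1-homogeneous language of ε-index `{x}`. -/
def iterC (x : ℕ) (L : Set (GTree S ar)) : ℕ → Set (GTree S ar)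
  | 0 => {eps x}
  | n + 1 => iterC x L n ∪ pcompL (iterC x L n) L

/-- Composition closure `L^⊛`. -/
def closC (x : ℕ) (L : Set (GTree S ar)) : Set (GTree S ar) := ⋃ n, iterC x L n

end GTree

structure TAut (S : Type) (ar : S → ℕ) (Q : Type) where
  F : Set Q
  δ : (f : S) → (Fin (ar f) → Q) → Set Q

namespace TAut

variable {S : Type} {ar : S → ℕ} {Q : Type}

/-- The run function `Δ`, with environment `ρ` giving the possible states at ε-leaves. -/
def run (A : TAut S ar Q) (ρ : ℕ → Set Q) : GTree S ar → Set Q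
  | .eps x => ρ x
  | .node f ts => { q | ∃ qs : Fin (ar f) → Q, (∀ i, qs i ∈ run A ρ (ts i)) ∧ q ∈ A.δ f qs }

/-- The language recognized by `A` (a set of 0-ary trees). -/
def lang (A : TAut S ar Q) : Set (GTree S ar) :=
  { t | GTree.epsIdx t = 0 ∧ (run A (fun _ => ∅) t ∩ A.F).Nonempty }

/-- The top language `L^q(A)` of a state `q` (a set of unary trees of ε-index `{1}`). -/
def top (A : TAut S ar Q) (q : Q) : Set (GTree S ar) :=
  { t | GTree.epsIdx t = {1} ∧
        (run A (fun x => if x = 1 then {q} else ∅) t ∩ A.F).Nonempty }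

/-- Determinism of a tree automaton. -/
def Det (A : TAut S ar Q) : Prop :=
  ∀ (f : S) (qs : Fin (ar f) → Q), (A.δ f qs).Subsingleton

/-- Accessibility: every state is reached by some 0-ary tree. -/
def Accessible (A : TAut S ar Q) : Prop :=
  ∀ q : Q, ∃ t : GTree S ar, GTree.epsIdx t = 0 ∧ q ∈ run A (fun _ => ∅) t

end TAut

/-- The bottom-up quotient automaton `A_L`. -/
def AutL {S : Type} {ar : S → ℕ} (L : Set (GTree S ar)) : TAut S ar (Set (GTree S ar)) where
  F := { M | (∃ t : GTree S ar, M = GTree.quotL t L) ∧ GTree.eps 1 ∈ M }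
  δ := fun f Ms => { M | ∃ ts : Fin (ar f) → GTree S ar,
        (∀ i, Ms i = GTree.quotL (ts i) L) ∧ M = GTree.quotL (GTree.node f ts) L }

/-
For a ground tree `d` reaching `q`, the quotient `d⁻¹(L(A))` consists of the unary trees `u`
with `u[ε₁ ← d] ∈ L(A)`. A run on `u[ε₁ ← d]` is a run on `u` started from the states reached
by `d`, and by determinism `q` is the only one of them; so `d⁻¹(L(A)) = L^q(A)`. Accessibility
supplies such a `d` for every state, and for a transition `q ∈ δ(f, q₁, …, q_k)` the tree
`f(d₁, …, d_k)` is one for `q`, which turns both conditions of a morphism into equations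
between quotients.
-/

namespace GTree

variable {S : Type} {ar : S → ℕ}

/-- The tree `u[ε₁ ← d]` of which `u` is a bottom-up quotient by `d`. -/
def plug (d u : GTree S ar) : GTree S ar :=
  subst (fun j => if j = 1 then d else eps (j - 1)) u

theorem epsIdx_subst (σ : ℕ → GTree S ar) (t : GTree S ar) :
    epsIdx (subst σ t) = ((epsIdx t).map (fun x => epsIdx (σ x))).sum := by
  induction t with
  | eps x => simp [subst, epsIdx]
  | node f ts ih =>
    simp only [subst, epsIdx, ih]
    exact (map_sum (Multiset.sumAddMonoidHom.comp (Multiset.mapAddMonoidHom _)) _ _).symm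

theorem epsIdx_plug_eq_zero {d u : GTree S ar} (hd : epsIdx d = 0) (hu : epsIdx u = {1}) :
    epsIdx (plug d u) = 0 := by
  simp [plug, epsIdx_subst, hu, hd]

theorem mem_quotL_iff {d u : GTree S ar} {L : Set (GTree S ar)} (hd : epsIdx d = 0)
    (hL : ∀ t ∈ L, epsIdx t = 0) :
    u ∈ quotL d L ↔ epsIdx u = {1} ∧ plug d u ∈ L := by
  simp only [quotL, quotT, Set.mem_iUnion₂, Set.mem_ofPred_eq]
  constructor
  · rintro ⟨t, ht, hu, rfl⟩
    exact ⟨by simpa [hL _ ht, hd] using hu, ht⟩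
  · rintro ⟨hu, hplug⟩
    exact ⟨plug d u, hplug, by simp [hL _ hplug, hd, hu], rfl⟩

end GTree

namespace TAut

open GTree

variable {S : Type} {ar : S → ℕ} {Q : Type}

theorem run_subst (A : TAut S ar Q) (ρ : ℕ → Set Q) (σ : ℕ → GTree S ar) (t : GTree S ar) :
    run A ρ (subst σ t) = run A (fun x => run A ρ (σ x)) t := by
  induction t with
  | eps x => rfl
  | node f ts ih => simp only [subst, run, ih]

theorem run_plug (A : TAut S ar Q) (d u : GTree S ar) :
    run A (fun _ => ∅) (plug d u) =
      run A (fun x => if x = 1 then run A (fun _ => ∅) d else ∅) u := by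
  rw [plug, run_subst]
  congr 1
  funext x
  split_ifs <;> rfl

theorem Det.run_subsingleton {A : TAut S ar Q} (hdet : A.Det) {ρ : ℕ → Set Q}
    (hρ : ∀ x, (ρ x).Subsingleton) (t : GTree S ar) : (run A ρ t).Subsingleton := by
  induction t with
  | eps x => exact hρ x
  | node f ts ih =>
    rintro q ⟨qs, hqs, hq⟩ q' ⟨qs', hqs', hq'⟩
    obtain rfl : qs = qs' := funext fun i => ih i (hqs i) (hqs' i)
    exact hdet f qs hq hq'

theorem Det.top_eq_quotL {A : TAut S ar Q} (hdet : A.Det) {q : Q} {d : GTree S ar}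
    (hd : epsIdx d = 0) (hdq : q ∈ run A (fun _ => ∅) d) :
    top A q = quotL d (lang A) := by
  have hrun : run A (fun _ => ∅) d = {q} :=
    (hdet.run_subsingleton (fun _ => Set.subsingleton_empty) d).eq_singleton_of_mem hdq
  ext u
  rw [mem_quotL_iff hd fun _ ht => ht.1]
  simp only [top, lang, Set.mem_ofPred_eq, run_plug, hrun]
  exact ⟨fun ⟨hu, hF⟩ => ⟨hu, epsIdx_plug_eq_zero hd hu, hF⟩, fun ⟨hu, _, hF⟩ => ⟨hu, hF⟩⟩

end TAut

/-- `q ↦ L^q(A)` is a morphism from any accessible deterministic tree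
automaton `A` to the bottom-up quotient automaton `A_{L(A)}`. -/
theorem top_is_morphism {S : Type} {ar : S → ℕ} {Q : Type} (A : TAut S ar Q)
    (hacc : TAut.Accessible A) (hdet : TAut.Det A) :
    (∀ q ∈ A.F, TAut.top A q ∈ (AutL (TAut.lang A)).F) ∧
    (∀ (f : S) (qs : Fin (ar f) → Q) (q : Q), q ∈ A.δ f qs →
      TAut.top A q ∈ (AutL (TAut.lang A)).δ f (fun i => TAut.top A (qs i))) := by
  constructor
  · intro q hqF
    obtain ⟨d, hd, hdq⟩ := hacc q
    exact ⟨⟨d, hdet.top_eq_quotL hd hdq⟩, rfl, q, by simp [TAut.run], hqF⟩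
  · intro f qs q hq
    choose ds hds hdqs using fun i => hacc (qs i)
    have hnode : GTree.epsIdx (GTree.node f ds) = 0 := by simp [GTree.epsIdx, hds]
    exact ⟨ds, fun i => hdet.top_eq_quotL (hds i) (hdqs i),
      hdet.top_eq_quotL hnode ⟨qs, hdqs, hq⟩⟩
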